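/- For 0 < t < 1 and any nonnegative integer n, define a_n(t) = ∑_{k≥0, 2k≤n} C(n-k,k) t^k (1-t)^{n-2k}. Then a_n(t) → 1/(1+t) as n → ∞. -/

import Mathlib

/-!
Pascal's rule along the antidiagonal gives the recurrence `a (n + 2) = (1 - t) a (n + 1) + t a n`,
whose characteristic roots are `1` and `-t`; with the initial values `a 0 = 1`, `a 1 = 1 - t` this
yields `(1 + t) a n = 1 - (-t) ^ (n + 1)`, and `(-t) ^ n → 0` for `|t| < 1`.
-/

open Finset Filter Topology

section ShortDiagonal

variable {R : Type*} [CommRing R]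

/-- The summand at `p = (n - k, k)` is `C(n - k, k) a ^ k b ^ (n - 2k)`, the Bernstein polynomial
`B_k^{n-k}(a)` when `b = 1 - a`. The truncated `p.1 - p.2` only occurs where
`p.1.choose p.2 = 0`. -/
def shortDiagonalSum (a b : R) (n : ℕ) : R :=
  ∑ p ∈ antidiagonal n, (p.1.choose p.2 : R) * a ^ p.2 * b ^ (p.1 - p.2)

@[simp]
theorem shortDiagonalSum_zero (a b : R) : shortDiagonalSum a b 0 = 1 := by
  simp [shortDiagonalSum]

@[simp]
theorem shortDiagonalSum_one (a b : R) : shortDiagonalSum a b 1 = b := by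
  simp [shortDiagonalSum, Nat.sum_antidiagonal_succ']

theorem sum_range_choose_eq_shortDiagonalSum (a b : R) (n : ℕ) :
    ∑ k ∈ range (n / 2 + 1), ((n - k).choose k : R) * a ^ k * b ^ (n - 2 * k) =
      shortDiagonalSum a b n := by
  rw [shortDiagonalSum, ← Nat.sum_antidiagonal_swap, Nat.sum_antidiagonal_eq_sum_range_succ_mk]
  refine sum_subset_zero_on_sdiff (range_subset_range.2 (by omega)) ?_ ?_
  · intro k hk
    have hk' : n / 2 < k := by simpa using (mem_sdiff.1 hk).2
    simp [Nat.choose_eq_zero_of_lt (show n - k < k by omega)]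
  · intro k _
    simp only [Prod.swap, Nat.sub_sub, ← two_mul]

theorem choose_mul_pow_mul_pow_succ_succ (a b : R) (i j : ℕ) :
    ((i + 1).choose (j + 1) : R) * a ^ (j + 1) * b ^ (i + 1 - (j + 1)) =
      a * ((i.choose j : R) * a ^ j * b ^ (i - j)) +
        b * ((i.choose (j + 1) : R) * a ^ (j + 1) * b ^ (i - (j + 1))) := by
  rcases lt_or_ge i (j + 1) with hij | hji
  · simp only [Nat.choose_succ_succ', Nat.choose_eq_zero_of_lt hij, add_zero, Nat.reduceSubDiff,
      Nat.cast_zero, zero_mul, mul_zero]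
    ring
  · obtain ⟨k, rfl⟩ := Nat.exists_eq_add_of_le hji
    simp only [Nat.choose_succ_succ', Nat.cast_add, Nat.add_sub_add_right,
      show j + 1 + k - j = k + 1 by omega, Nat.add_sub_cancel_left]
    ring

theorem shortDiagonalSum_add_two (a b : R) (n : ℕ) :
    shortDiagonalSum a b (n + 2) =
      b * shortDiagonalSum a b (n + 1) + a * shortDiagonalSum a b n := by
  conv_lhs => rw [shortDiagonalSum, Nat.sum_antidiagonal_succ, Nat.sum_antidiagonal_succ']
  rw [shortDiagonalSum, Nat.sum_antidiagonal_succ', shortDiagonalSum]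
  simp only [choose_mul_pow_mul_pow_succ_succ, sum_add_distrib, mul_add, mul_sum]
  simp only [Nat.choose_zero_succ, Nat.cast_zero, zero_mul, zero_tsub, pow_zero, mul_one,
    Nat.choose_zero_right, Nat.cast_one, tsub_zero, one_mul, zero_add]
  ring

theorem one_add_mul_shortDiagonalSum (t : R) (n : ℕ) :
    (1 + t) * shortDiagonalSum t (1 - t) n = 1 - (-t) ^ (n + 1) := by
  induction n using Nat.twoStepInduction with
  | zero => simp
  | one => rw [shortDiagonalSum_one]; ring
  | more n ih₀ ih₁ =>
    rw [shortDiagonalSum_add_two]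
    linear_combination (1 - t) * ih₁ + t * ih₀

end ShortDiagonal

theorem tendsto_shortDiagonalSum {t : ℝ} (ht : |t| < 1) :
    Tendsto (shortDiagonalSum t (1 - t)) atTop (𝓝 (1 / (1 + t))) := by
  have hne : 1 + t ≠ 0 := by linarith [neg_abs_le t]
  have hclosed (n : ℕ) : shortDiagonalSum t (1 - t) n = (1 - (-t) ^ (n + 1)) / (1 + t) := by
    rw [← one_add_mul_shortDiagonalSum, mul_div_cancel_left₀ _ hne]
  have hpow : Tendsto (fun n : ℕ ↦ (-t) ^ (n + 1)) atTop (𝓝 0) :=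
    (tendsto_pow_atTop_nhds_zero_of_abs_lt_one (by rwa [abs_neg])).comp (tendsto_add_atTop_nat 1)
  have h := (tendsto_const_nhds (x := (1 : ℝ))).sub hpow |>.div_const (1 + t)
  rw [sub_zero] at h
  exact h.congr fun n ↦ (hclosed n).symm

/-- For `0 < t < 1`, the short-diagonal Bernstein sums converge to `1/(1+t)`. -/
theorem bernstein_short_diagonal_tendsto (t : ℝ) (h0 : 0 < t) (h1 : t < 1) :
    Filter.Tendsto
      (fun n : ℕ =>
        ∑ k ∈ Finset.range (n / 2 + 1), ((n - k).choose k : ℝ) * t ^ k * (1 - t) ^ (n - 2 * k))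
      Filter.atTop (nhds (1 / (1 + t))) := by
  simpa only [sum_range_choose_eq_shortDiagonalSum] using
    tendsto_shortDiagonalSum (abs_lt.2 ⟨by linarith, h1⟩)
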